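/- arXiv:2508.03433 — 4 statements merged into one kernel-verified Lean document; each statement's English description precedes it below -/
import Mathlib

section
/- Let G = (V,E) be a directed graph with m edges and c an interval function of width at most w admitting a c-respecting Eulerian trail. Then at every single time step t ∈ [1,m], at most 2w - 1 edges are available. -/
open Finset

/-- An edge `e` (with interval `c e = [ (c e).1, (c e).2 ]`) is available at time `t`. -/
def Available {E : Type*} (c : E → ℕ × ℕ) (e : E) (t : ℕ) : Prop :=
  (c e).1 ≤ t ∧ t ≤ (c e).2

/-- A `c`-respecting Eulerian trail. -/
def IsRespectingEulerTrail {V E : Type*} {m : ℕ} (head tail : E → V)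
    (c : E → ℕ × ℕ) (π : Fin m ≃ E) : Prop :=
  (∀ i : Fin m, ∀ h : i.val + 1 < m, head (π i) = tail (π ⟨i.val + 1, h⟩)) ∧
  (∀ i : Fin m, Available c (π i) (i.val + 1))

open Classical in
theorem stmt_2 {V E : Type*} [Fintype E] (head tail : E → V)
    (c : E → ℕ × ℕ) (w : ℕ) (m : ℕ) (hm : m = Fintype.card E)
    (hsub : ∀ e, 1 ≤ (c e).1 ∧ (c e).2 ≤ m)
    (hwidth : ∀ e, (c e).2 + 1 ≤ (c e).1 + w)
    (π : Fin m ≃ E) (hπ : IsRespectingEulerTrail head tail c π)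
    (t : ℕ) (ht : 1 ≤ t) (htm : t ≤ m) :
    (Finset.univ.filter (fun e => Available c e t)).card ≤ 2 * w - 1 := by
  have key : ∀ e ∈ Finset.univ.filter (fun e => Available c e t),
      (π.symm e).val + 1 ∈ Finset.Icc (t + 1 - w) (t + w - 1) := by
    intro e he
    simp only [Finset.mem_filter, Finset.mem_univ, true_and] at he
    obtain ⟨h1, h2⟩ := he
    have huse := hπ.2 (π.symm e)
    rw [Equiv.apply_symm_apply] at huse
    obtain ⟨h3, h4⟩ := huse
    have hw := hwidth e
    simp only [Finset.mem_Icc]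
    omega
  have hinj : Set.InjOn (fun e => (π.symm e).val + 1)
      ↑(Finset.univ.filter (fun e => Available c e t)) := by
    intro a _ b _ hab
    simp only at hab
    have : π.symm a = π.symm b := Fin.ext (by omega)
    exact π.symm.injective this
  calc (Finset.univ.filter (fun e => Available c e t)).card
      ≤ (Finset.Icc (t + 1 - w) (t + w - 1)).card :=
        Finset.card_le_card_of_injOn _ key hinj
    _ ≤ 2 * w - 1 := by rw [Nat.card_Icc]; omega
end

section
/- Let Σ = {A, T}, let ℓ ≥ 1, and for strings x, y ∈ Σ^ℓ define s₁ = A^{ℓ+2}·T·x·T·A^{ℓ+3}·T·y·T·A and s₂ = A^{ℓ+3}·T·x·T·A^{ℓ+3}·T·y·T (both of length 4ℓ+10). Consider the complete de Bruijn graph of order 4ℓ+11 over Σ, whose nodes are the strings of length 4ℓ+10, with an edge from u to v iff u[2..] = v[..len-1]. Let v₂ = A^{ℓ+2}·T·x·T·A^{ℓ+3}·T·y·T·A, and for any z ∈ Σ^ℓ let w₁ = A^{ℓ+3}·T·y·T·A^{ℓ+3}·T·z·T. Then every directed path from v₂ to w₁ has length at least 2ℓ + 4, and there is exactly one path of length exactly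 2ℓ + 4, namely the one spelled by appending the string A^{ℓ+2}·T·z·T. -/
/-- `i` copies of the letter `A` (encoded as `false`); `T` is encoded as `true`. -/
def repA (i : ℕ) : List Bool := List.replicate i false

lemma get_mid (l₁ l₂ : List Bool) (b : Bool) (n : ℕ) (h : l₁.length = n) :
    (l₁ ++ b :: l₂)[n]? = some b := by
  rw [List.getElem?_append_right (by omega), h]
  simp

/-- In the complete de Bruijn graph of order `4ℓ+11` over `Σ = {A, T}` (nodes are the
strings of length `4ℓ+10`, with an edge `u → v` iff `v` is obtained from `u` by deleting
the first letter and appending one letter), a directed path of length `r` starting at a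
node `u` is exactly described by the string `s ∈ Σ^r` it spells, and its endpoint is the
suffix of length `4ℓ+10` of `u · s`, i.e. `(u ++ s).drop s.length`.

For `v₂ = A^{ℓ+2}·T·x·T·A^{ℓ+3}·T·y·T·A` and `w₁ = A^{ℓ+3}·T·y·T·A^{ℓ+3}·T·z·T`:
every directed path from `v₂` to `w₁` has length at least `2ℓ+4`, and there is exactly
one path of length `2ℓ+4`, namely the one spelled by `A^{ℓ+2}·T·z·T`. -/
theorem stmt_6 (ℓ : ℕ) (hℓ : 1 ≤ ℓ) (x y z : List Bool)
    (hx : x.length = ℓ) (hy : y.length = ℓ) (hz : z.length = ℓ)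
    (v₂ w₁ : List Bool)
    (hv₂ : v₂ = repA (ℓ+2) ++ [true] ++ x ++ [true] ++ repA (ℓ+3) ++ [true] ++ y
              ++ [true] ++ repA 1)
    (hw₁ : w₁ = repA (ℓ+3) ++ [true] ++ y ++ [true] ++ repA (ℓ+3) ++ [true] ++ z
              ++ [true]) :
    (∀ s : List Bool, (v₂ ++ s).drop s.length = w₁ → 2 * ℓ + 4 ≤ s.length) ∧
    (∀ s : List Bool, s.length = 2 * ℓ + 4 →
      ((v₂ ++ s).drop s.length = w₁ ↔ s = repA (ℓ+2) ++ [true] ++ z ++ [true])) := by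
  have hv2len : v₂.length = 4*ℓ+10 := by
    simp [hv₂, repA, hx, hy]; omega
  -- T at position ℓ+2 of v₂
  have hT1 : v₂[ℓ+2]? = some true := by
    rw [hv₂]
    have : repA (ℓ+2) ++ [true] ++ x ++ [true] ++ repA (ℓ+3) ++ [true] ++ y
        ++ [true] ++ repA 1
        = repA (ℓ+2) ++ true :: (x ++ [true] ++ repA (ℓ+3) ++ [true] ++ y
        ++ [true] ++ repA 1) := by
      simp [List.append_assoc]
    rw [this]
    exact get_mid _ _ _ _ (by simp [repA])
  -- T at position 2ℓ+3 of v₂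
  have hT2 : v₂[2*ℓ+3]? = some true := by
    rw [hv₂]
    have : repA (ℓ+2) ++ [true] ++ x ++ [true] ++ repA (ℓ+3) ++ [true] ++ y
        ++ [true] ++ repA 1
        = (repA (ℓ+2) ++ [true] ++ x) ++ true :: (repA (ℓ+3) ++ [true] ++ y
        ++ [true] ++ repA 1) := by
      simp [List.append_assoc]
    rw [this]
    exact get_mid _ _ _ _ (by simp [repA, hx]; omega)
  -- w₁ starts with ℓ+3 copies of A
  have hwA : ∀ i, i < ℓ+3 → w₁[i]? = some false := by
    intro i hi
    rw [hw₁]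
    rw [List.getElem?_append_left (by simp [repA]; omega),
        List.getElem?_append_left (by simp [repA]; omega),
        List.getElem?_append_left (by simp [repA]; omega),
        List.getElem?_append_left (by simp [repA]; omega),
        List.getElem?_append_left (by simp [repA]; omega),
        List.getElem?_append_left (by simp [repA]; omega),
        List.getElem?_append_left (by simp [repA]; omega)]
    simp [repA, List.getElem?_replicate, hi]
  constructor
  · intro s hs
    by_contra h
    push_neg at h
    set r := s.length with hr
    have key : ∀ i, w₁[i]? = (v₂ ++ s)[r + i]? := by
      intro i
      rw [← hs, List.getElem?_drop]
    rcases le_or_gt r (ℓ+2) with hc | hc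
    · have h1 := key (ℓ+2-r)
      have h2 : r + (ℓ+2-r) = ℓ+2 := by omega
      rw [h2, hwA _ (by omega), List.getElem?_append_left (by omega), hT1] at h1
      simp at h1
    · have h1 := key (2*ℓ+3-r)
      have h2 : r + (2*ℓ+3-r) = 2*ℓ+3 := by omega
      rw [h2, hwA _ (by omega), List.getElem?_append_left (by omega), hT2] at h1
      simp at h1
  · intro s hs
    have hsplit : v₂ ++ s = (repA (ℓ+2) ++ [true] ++ x ++ [true]) ++
        ((repA (ℓ+3) ++ [true] ++ y ++ [true]) ++ (repA 1 ++ s)) := by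
      rw [hv₂]; simp [List.append_assoc]
    have hlen : (repA (ℓ+2) ++ [true] ++ x ++ [true]).length = 2*ℓ+4 := by
      simp [repA, hx]; omega
    rw [hsplit, hs, List.drop_left' hlen]
    have hw' : w₁ = (repA (ℓ+3) ++ [true] ++ y ++ [true]) ++
        (repA (ℓ+3) ++ [true] ++ z ++ [true]) := by
      rw [hw₁]; simp [List.append_assoc]
    rw [hw']
    constructor
    · intro h
      have h' := List.append_cancel_left h
      have : repA 1 ++ s = false :: s := by simp [repA]
      rw [this] at h'
      have h3 : repA (ℓ+3) ++ [true] ++ z ++ [true]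
          = false :: (repA (ℓ+2) ++ [true] ++ z ++ [true]) := by
        simp [repA, List.replicate_succ, List.append_assoc]
      rw [h3] at h'
      exact (List.cons.injEq _ _ _ _ ▸ h').2
    · intro h
      rw [h]
      simp [repA, List.replicate_succ, List.append_assoc]
end

section
/- Let G = (V,E) be a directed graph with m edges and c an interval function of width at most w, and suppose a c-respecting Eulerian trail exists. Then for each time step t ∈ [1,m], the number of distinct sets S ⊆ E(t) for which there exists a c-respecting Eulerian trail P = e₁…e_m with S = { e_i : i ∈ [1,t], e_i ∈ E(t) } is at most C(2w-1, w), where C denotes the binomial coefficient. -/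
open Finset

/-!
In a `c`-respecting trail the edge at position `i` is available at time `i`, so the edges
available at time `t` sit at positions within distance `w` of `t`: there are at most `2w - 1`
of them, whichever trail is used to count them. Every edge whose interval ends before `t` sits
among the first `t` positions, so each set `S` has exactly `t - a` elements, where `a` counts
these expired edges independently of the trail. The sets `S` are thus `(t - a)`-subsets of a
set of size at most `2w - 1`, and `C(2w - 1, k) ≤ C(2w - 1, w)` for every `k`.
-/

section
open Classical

theorem card_filter_available_le {E : Type*} [Fintype E] (c : E → ℕ × ℕ) (w : ℕ)
    (hwidth : ∀ e, (c e).2 + 1 ≤ (c e).1 + w) (pos : E → ℕ) (hpos : Function.Injective pos)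
    (havail : ∀ e, Available c e (pos e)) (t : ℕ) :
    #{e | Available c e t} ≤ 2 * w - 1 := by
  -- `pos e` and `t` both lie in `c e`, so `|pos e - t| < w`; the shift by `w` avoids
  -- truncated subtraction.
  calc #{e | Available c e t} ≤ #(Ioo t (t + 2 * w)) := by
        refine card_le_card_of_injOn (pos · + w) (fun e he => ?_)
          (fun _ _ _ _ h => hpos (Nat.add_right_cancel h))
        have hpos := havail e
        have hw := hwidth e
        simp only [mem_coe, mem_filter, mem_univ, true_and] at he
        simp only [coe_Ioo, Set.mem_Ioo]
        unfold Available at he hpos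
        omega
    _ = 2 * w - 1 := by rw [Nat.card_Ioo]; omega

theorem card_filter_le_and_available_add_card_filter_snd_lt {E : Type*} [Fintype E]
    (c : E → ℕ × ℕ) (pos : E → ℕ) (havail : ∀ e, Available c e (pos e)) (t : ℕ) :
    #{e | pos e ≤ t ∧ Available c e t} + #{e | (c e).2 < t} = #{e | pos e ≤ t} := by
  rw [← card_union_of_disjoint]
  · congr 1
    ext e
    have := havail e
    simp only [mem_union, mem_filter, mem_univ, true_and]
    unfold Available at this ⊢
    omega
  · refine disjoint_filter.2 fun e _ he hlt => ?_
    unfold Available at he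
    omega

theorem Equiv.card_filter_symm_val_add_one_le {E : Type*} [Fintype E] {m : ℕ} (π : Fin m ≃ E)
    {t : ℕ} (ht : t ≤ m) : #{e | (π.symm e).val + 1 ≤ t} = t := by
  calc #{e | (π.symm e).val + 1 ≤ t} = #{i : Fin m | i.val < t} :=
        card_equiv π.symm fun _ => by simp only [mem_filter, mem_univ, true_and]; omega
    _ = t := by rw [Fin.card_filter_val_lt, min_eq_right ht]

end

theorem Nat.choose_two_mul_sub_one_le (w k : ℕ) : (2 * w - 1).choose k ≤ (2 * w - 1).choose w := by
  refine (Nat.choose_le_middle k _).trans ?_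
  rcases w with _ | w
  · rfl
  · rw [show 2 * (w + 1) - 1 = 2 * w + 1 by omega, Nat.choose_symm_half,
      show (2 * w + 1) / 2 = w by omega]

theorem IsRespectingEulerTrail.available_symm {V E : Type*} {m : ℕ} {head tail : E → V}
    {c : E → ℕ × ℕ} {π : Fin m ≃ E} (hπ : IsRespectingEulerTrail head tail c π) (e : E) :
    Available c e ((π.symm e).val + 1) := by
  simpa using hπ.2 (π.symm e)

open Classical in
theorem stmt_10_general {V E : Type*} [Fintype E] (head tail : E → V)
    (c : E → ℕ × ℕ) (w : ℕ) (m : ℕ)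
    (hwidth : ∀ e, (c e).2 + 1 ≤ (c e).1 + w)
    (hex : ∃ π : Fin m ≃ E, IsRespectingEulerTrail head tail c π)
    (t : ℕ) (htm : t ≤ m) :
    ((Finset.univ : Finset (Finset E)).filter
        (fun S => ∃ π : Fin m ≃ E, IsRespectingEulerTrail head tail c π ∧
          S = Finset.univ.filter
                (fun e => (π.symm e).val + 1 ≤ t ∧ Available c e t))).card
      ≤ (2 * w - 1).choose w := by
  obtain ⟨π₀, hπ₀⟩ := hex
  have hcard : #{e | Available c e t} ≤ 2 * w - 1 :=
    card_filter_available_le c w hwidth _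
      (fun _ _ h => π₀.symm.injective (Fin.ext (by simpa using h))) hπ₀.available_symm t
  set a := #{e | (c e).2 < t}
  calc _ ≤ #(powersetCard (t - a) {e | Available c e t}) := card_le_card fun S hS => ?_
    _ ≤ (2 * w - 1).choose (t - a) := by
        rw [card_powersetCard]; exact Nat.choose_le_choose _ hcard
    _ ≤ (2 * w - 1).choose w := Nat.choose_two_mul_sub_one_le w _
  obtain ⟨π, hπ, rfl⟩ := (mem_filter.1 hS).2
  refine mem_powersetCard.2 ⟨monotone_filter_right _ fun _ _ h => h.2, ?_⟩
  have hsplit := card_filter_le_and_available_add_card_filter_snd_lt c _ hπ.available_symm t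
  rw [π.card_filter_symm_val_add_one_le htm] at hsplit
  omega

open Classical in
theorem stmt_10 {V E : Type*} [Fintype E] (head tail : E → V)
    (c : E → ℕ × ℕ) (w : ℕ) (m : ℕ) (hm : m = Fintype.card E)
    (hsub : ∀ e, 1 ≤ (c e).1 ∧ (c e).2 ≤ m)
    (hwidth : ∀ e, (c e).2 + 1 ≤ (c e).1 + w)
    (hex : ∃ π : Fin m ≃ E, IsRespectingEulerTrail head tail c π)
    (t : ℕ) (ht : 1 ≤ t) (htm : t ≤ m) :
    ((Finset.univ : Finset (Finset E)).filter
        (fun S => ∃ π : Fin m ≃ E, IsRespectingEulerTrail head tail c π ∧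
          S = Finset.univ.filter
                (fun e => (π.symm e).val + 1 ≤ t ∧ Available c e t))).card
      ≤ (2 * w - 1).choose w :=
  stmt_10_general head tail c w m hwidth hex t htm
end

section
/- Suppose a de Bruijn multigraph G with interval function c admits a c-respecting Eulerian trail. Then it admits a c-respecting Eulerian trail W = e₁ … e_m with the property: for every time step t, if the edge e_t has a parallel edge e' (same endpoints) that is also available at time t and occurs at some later position on W, then max c(e_t) ≤ max c(e'). -/
/-- Two edges of a multigraph are parallel if they share head and tail. -/
def Parallel {V E : Type*} (head tail : E → V) (e e' : E) : Prop :=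
  head e = head e' ∧ tail e = tail e'

theorem stmt_15 {V E : Type*} [Fintype E] (head tail : E → V)
    (c : E → ℕ × ℕ) (m : ℕ) (hm : m = Fintype.card E)
    (hex : ∃ π : Fin m ≃ E, IsRespectingEulerTrail head tail c π) :
    ∃ π : Fin m ≃ E, IsRespectingEulerTrail head tail c π ∧
      ∀ t : Fin m, ∀ e' : E,
        Parallel head tail (π t) e' →
        Available c e' (t.val + 1) →
        t.val < (π.symm e').val →
        (c (π t)).2 ≤ (c e').2 := by
  classical
  obtain ⟨π₀, hπ₀⟩ := hex
  set f : (Fin m ≃ E) → ℕ := fun π => ∑ i : Fin m, (m - i.val) * (c (π i)).2 with hf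
  have hP : ∃ n, ∃ π : Fin m ≃ E, IsRespectingEulerTrail head tail c π ∧ f π = n :=
    ⟨f π₀, π₀, hπ₀, rfl⟩
  obtain ⟨π, hπ, hfπ⟩ := Nat.find_spec hP
  refine ⟨π, hπ, ?_⟩
  by_contra hcon
  push_neg at hcon
  obtain ⟨t, e', hpar, havail, hlt, hb⟩ := hcon
  set s : Fin m := π.symm e' with hs
  have hπs : π s = e' := π.apply_symm_apply e'
  have hts : t ≠ s := by
    intro h
    rw [h] at hlt
    omega
  set π' : Fin m ≃ E := (Equiv.swap t s).trans π with hπ'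
  have hπ't : π' t = e' := by
    simp [hπ', Equiv.swap_apply_left, hπs]
  have hπ's : π' s = π t := by
    simp [hπ', Equiv.swap_apply_right]
  have hπ'o : ∀ i, i ≠ t → i ≠ s → π' i = π i := by
    intro i h1 h2
    simp [hπ', Equiv.swap_apply_of_ne_of_ne h1 h2]
  have hhead : ∀ i, head (π' i) = head (π i) := by
    intro i
    by_cases h1 : i = t
    · rw [h1, hπ't, ← hpar.1]
    by_cases h2 : i = s
    · rw [h2, hπ's, hπs, hpar.1]
    · rw [hπ'o i h1 h2]
  have htail : ∀ i, tail (π' i) = tail (π i) := by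
    intro i
    by_cases h1 : i = t
    · rw [h1, hπ't, ← hpar.2]
    by_cases h2 : i = s
    · rw [h2, hπ's, hπs, hpar.2]
    · rw [hπ'o i h1 h2]
  have havt : Available c (π t) (t.val + 1) := hπ.2 t
  have havs : Available c e' (s.val + 1) := by
    have := hπ.2 s
    rwa [hπs] at this
  have htrail' : IsRespectingEulerTrail head tail c π' := by
    constructor
    · intro i h
      rw [hhead, htail]
      exact hπ.1 i h
    · intro i
      by_cases h1 : i = t
      · rw [h1, hπ't]; exact havail
      by_cases h2 : i = s
      · rw [h2, hπ's]
        constructor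
        · exact le_trans havt.1 (by omega)
        · have h3 : s.val + 1 ≤ (c e').2 := havs.2
          omega
      · rw [hπ'o i h1 h2]; exact hπ.2 i
  -- now show f π' < f π, contradicting minimality
  have hsum : ∀ F G : Fin m → ℕ, (∀ i, i ≠ t → i ≠ s → F i = G i) →
      F t + F s < G t + G s → ∑ i, F i < ∑ i, G i := by
    intro F G hFG hlt2
    have hsmem : s ∈ Finset.univ.erase t :=
      Finset.mem_erase.mpr ⟨Ne.symm hts, Finset.mem_univ s⟩
    have e1 : ∀ H : Fin m → ℕ,
        ∑ i, H i = ∑ i ∈ (Finset.univ.erase t).erase s, H i + H s + H t := by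
      intro H
      rw [Finset.sum_erase_add _ _ hsmem, Finset.sum_erase_add _ _ (Finset.mem_univ t)]
    rw [e1 F, e1 G]
    have heq : ∑ i ∈ (Finset.univ.erase t).erase s, F i
        = ∑ i ∈ (Finset.univ.erase t).erase s, G i := by
      refine Finset.sum_congr rfl ?_
      intro i hi
      simp only [Finset.mem_erase] at hi
      exact hFG i hi.2.1 hi.1
    omega
  have hkey : f π' < f π := by
    apply hsum
    · intro i h1 h2
      rw [hπ'o i h1 h2]
    · rw [hπ't, hπ's, hπs]
      have h1 : m - s.val < m - t.val := by
        have := s.isLt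
        omega
      obtain ⟨p, hp⟩ : ∃ p, m - t.val = (m - s.val) + p + 1 :=
        ⟨(m - t.val) - (m - s.val) - 1, by omega⟩
      obtain ⟨q, hq⟩ : ∃ q, (c (π t)).2 = (c e').2 + q + 1 :=
        ⟨(c (π t)).2 - (c e').2 - 1, by omega⟩
      rw [hp, hq]
      nlinarith
  have hmin : f π ≤ f π' := by
    rw [hfπ]
    exact Nat.find_min' hP ⟨π', htrail', rfl⟩
  omega
end
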